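/- Suppose c ≤ πL with L a positive integer. Then for every x ∈ ℝ³, the sum over lattice points outside the unit ball satisfies Σ_{k∈ℤ³, k/L∉R} |h_c(x − k/L)|² ≤ (4π/3) c³ L³. -/

import Mathlib

open MeasureTheory Real RealInnerProductSpace

noncomputable section

/-- ℝ³ as a Euclidean space. -/
abbrev E3 := EuclideanSpace ℝ (Fin 3)

/-- The closed unit ball in ℝ³. -/
def ballR : Set E3 := Metric.closedBall 0 1

/-- The three-dimensional besinc function: the inverse Fourier transform of the
indicator of the ball of radius `c`, i.e. `(c/(2π))³ ∫_R e^{ic⟨x,y⟩} dy`. -/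
def besinc (c : ℝ) (x : E3) : ℂ :=
  (c / (2 * π)) ^ 3 * ∫ y in ballR, Complex.exp (Complex.I * (c * ⟪x, y⟫ : ℝ))

/-- Embed an integer lattice point `k ∈ ℤ³` into ℝ³. -/
def kv (k : Fin 3 → ℤ) : E3 := (WithLp.equiv 2 (Fin 3 → ℝ)).symm (fun i => (k i : ℝ))

/-- `ξ_c(x)² = Σ_{k/L ∉ R} |h_c(x − k/L)|²`, the sum over lattice points outside the unit ball. -/
def xiSq (c : ℝ) (L : ℕ) (x : E3) : ℝ :=
  ∑' k : {k : Fin 3 → ℤ // (L : ℝ)⁻¹ • kv k ∉ ballR},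
    ‖besinc c (x - (L : ℝ)⁻¹ • kv k.1)‖ ^ 2

/-!
The functions `(2π)^{-3/2} e^{i⟨k, y⟩}`, `k ∈ ℤ³`, are orthonormal in `L²([-π, π]³)`. As
`c / L ≤ π`, the ball `B` of radius `c / L` lies in that cube, and rescaling `B` to the unit ball
shows that the `k`-th Fourier coefficient of `1_B(y) e^{iL⟨x, y⟩}` is
`(2π)^{3/2} L⁻³ h_c(x - k / L)`. Bessel's inequality bounds the sum of the squares of these
coefficients by `vol B = (4π/3) (c / L)³`, which gives the claim even with an extra factor
`(2π)⁻³` on the right.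
-/

open Set Metric
open scoped Pointwise

theorem MeasureTheory.L2.inner_toLp_toLp {α 𝕜 F : Type*} [RCLike 𝕜] [NormedAddCommGroup F]
    [InnerProductSpace 𝕜 F] [MeasurableSpace α] {μ : Measure α} {f g : α → F}
    (hf : MemLp f 2 μ) (hg : MemLp g 2 μ) :
    inner 𝕜 (hf.toLp f) (hg.toLp g) = ∫ a, inner 𝕜 (f a) (g a) ∂μ :=
  (L2.inner_def _ _).trans <| integral_congr_ae <| by
    filter_upwards [hf.coeFn_toLp, hg.coeFn_toLp] with a hfa hga
    rw [hfa, hga]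

section PlaneWave

variable {E : Type*} [NormedAddCommGroup E] [InnerProductSpace ℝ E]

def planeWave (w y : E) : ℂ := Complex.exp (Complex.I * (⟪w, y⟫ : ℝ))

@[simp]
theorem planeWave_zero_left (y : E) : planeWave 0 y = 1 := by
  simp [planeWave]

theorem norm_planeWave (w y : E) : ‖planeWave w y‖ = 1 :=
  Complex.norm_exp_I_mul_ofReal _

theorem continuous_planeWave (w : E) : Continuous (planeWave w) := by
  unfold planeWave
  fun_prop

theorem planeWave_mul_conj (v w y : E) :
    planeWave v y * starRingEnd ℂ (planeWave w y) = planeWave (v - w) y := by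
  simp only [planeWave, ← Complex.exp_conj, ← Complex.exp_add, map_mul, Complex.conj_I,
    Complex.conj_ofReal, inner_sub_left]
  push_cast
  ring_nf

theorem planeWave_smul_comm (a : ℝ) (w y : E) : planeWave (a • w) y = planeWave w (a • y) := by
  rw [planeWave, planeWave, real_inner_smul_left, real_inner_smul_right]

theorem memLp_planeWave [MeasurableSpace E] [OpensMeasurableSpace E] {p : ENNReal}
    {μ : Measure E} [IsFiniteMeasure μ] (w : E) : MemLp (planeWave w) p μ :=
  .of_bound (continuous_planeWave w).aestronglyMeasurable 1
    (ae_of_all _ fun y => (norm_planeWave w y).le)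

theorem setIntegral_closedBall_planeWave [FiniteDimensional ℝ E] [MeasurableSpace E]
    [BorelSpace E] (μ : Measure E) [μ.IsAddHaarMeasure] {a : ℝ} (ha : 0 < a) (w : E) :
    ∫ y in closedBall 0 a, planeWave w y ∂μ =
      (a ^ Module.finrank ℝ E : ℝ) • ∫ u in closedBall 0 1, planeWave (a • w) u ∂μ := by
  have hball : a • closedBall (0 : E) 1 = closedBall 0 a := by
    rw [smul_closedBall' ha.ne', smul_zero, Real.norm_of_nonneg ha.le, mul_one]
  simp_rw [planeWave_smul_comm]
  rw [Measure.setIntegral_comp_smul_of_pos μ _ _ ha, hball, smul_inv_smul₀ (by positivity)]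

end PlaneWave

theorem integral_Icc_neg_pi_pi_exp_int_mul (m : ℤ) :
    ∫ t in Icc (-π) π, Complex.exp (Complex.I * m * t) =
      if m = 0 then ((2 * π : ℝ) : ℂ) else 0 := by
  rw [integral_Icc_eq_integral_Ioc, ← intervalIntegral.integral_of_le (by linarith [pi_pos])]
  split_ifs with hm
  · simp [hm]
    ring
  · have hIm : Complex.I * m ≠ 0 := by simpa using hm
    have hperiod : Complex.exp (Complex.I * m * π) = Complex.exp (Complex.I * m * (-π : ℝ)) := by
      rw [← mul_one (Complex.exp (_ * (-π : ℝ))), ← Complex.exp_int_mul_two_pi_mul_I m,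
        ← Complex.exp_add]
      push_cast
      ring_nf
    rw [integral_exp_mul_complex hIm, hperiod, sub_self, zero_div]

section Cube

variable {ι : Type*}

variable (ι) in
def piCube : Set (EuclideanSpace ℝ ι) := WithLp.ofLp ⁻¹' univ.pi fun _ => Icc (-π) π

def latticePoint (m : ι → ℤ) : EuclideanSpace ℝ ι := WithLp.toLp 2 fun i => (m i : ℝ)

theorem latticePoint_sub (m n : ι → ℤ) :
    latticePoint (m - n) = latticePoint m - latticePoint n := by
  ext i
  simp [latticePoint]

theorem isCompact_piCube : IsCompact (piCube ι) :=
  (EuclideanSpace.equiv ι ℝ).toHomeomorph.isCompact_preimage.2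
    (isCompact_univ_pi fun _ => isCompact_Icc)

variable [Fintype ι]

instance : IsFiniteMeasure (volume.restrict (piCube ι)) :=
  isFiniteMeasure_restrict.2 isCompact_piCube.measure_lt_top.ne

theorem closedBall_subset_piCube {a : ℝ} (ha : a ≤ π) : closedBall 0 a ⊆ piCube ι :=
  fun y hy i _ => abs_le.1 <|
    ((PiLp.norm_apply_le y i).trans (mem_closedBall_zero_iff.1 hy)).trans ha

theorem integral_piCube_planeWave_latticePoint (m : ι → ℤ) :
    ∫ y in piCube ι, planeWave (latticePoint m) y =
      if m = 0 then (((2 * π) ^ Fintype.card ι : ℝ) : ℂ) else 0 := by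
  have hprod : ∀ z : ι → ℝ,
      planeWave (latticePoint m) (WithLp.toLp 2 z) = ∏ i, Complex.exp (Complex.I * m i * z i) := by
    intro z
    simp only [planeWave, latticePoint, PiLp.inner_apply, RCLike.inner_apply, conj_trivial,
      Complex.ofReal_sum, Finset.mul_sum, ← Complex.exp_sum]
    exact congrArg Complex.exp (Finset.sum_congr rfl fun i _ => by push_cast; ring)
  rw [← (PiLp.volume_preserving_toLp ι).setIntegral_preimage_emb
    (MeasurableEquiv.toLp 2 _).measurableEmbedding]
  change ∫ z in univ.pi _, _ ∂_ = _
  simp only [hprod]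
  rw [volume_pi, Measure.restrict_pi_pi,
    integral_fintype_prod_eq_prod fun i (t : ℝ) => Complex.exp (Complex.I * m i * t)]
  simp only [integral_Icc_neg_pi_pi_exp_int_mul]
  split_ifs with hm
  · simp [hm]
  · obtain ⟨i, hi⟩ := Function.ne_iff.1 hm
    exact Finset.prod_eq_zero (Finset.mem_univ i) (if_neg hi)

end Cube

section CubeFourier

variable {ι : Type*} [Fintype ι]

local notation "L²[" ι "]" => Lp ℂ 2 (volume.restrict (piCube ι))

def cubeFourierConst (ι : Type*) [Fintype ι] : ℝ := (√((2 * π) ^ Fintype.card ι))⁻¹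

theorem cubeFourierConst_sq_mul : cubeFourierConst ι ^ 2 * (2 * π) ^ Fintype.card ι = 1 := by
  rw [cubeFourierConst, inv_pow, Real.sq_sqrt (by positivity), inv_mul_cancel₀ (by positivity)]

def cubeFourierLp (k : ι → ℤ) : L²[ι] :=
  (cubeFourierConst ι : ℂ) • (memLp_planeWave (latticePoint k)).toLp _

theorem inner_cubeFourierLp_toLp {f : EuclideanSpace ℝ ι → ℂ}
    (hf : MemLp f 2 (volume.restrict (piCube ι))) (k : ι → ℤ) :
    inner ℂ (cubeFourierLp k) (hf.toLp f) =
      cubeFourierConst ι * ∫ y in piCube ι, f y * starRingEnd ℂ (planeWave (latticePoint k) y) := by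
  simp only [cubeFourierLp, inner_smul_left, Complex.conj_ofReal, L2.inner_toLp_toLp,
    RCLike.inner_apply]

theorem orthonormal_cubeFourierLp : Orthonormal ℂ (cubeFourierLp (ι := ι)) := by
  refine orthonormal_iff_ite.2 fun k l => ?_
  nth_rw 2 [cubeFourierLp]
  rw [inner_smul_right, inner_cubeFourierLp_toLp]
  simp only [planeWave_mul_conj, ← latticePoint_sub, integral_piCube_planeWave_latticePoint,
    sub_eq_zero, eq_comm (a := l)]
  split_ifs
  · norm_cast
    rw [← mul_assoc, ← sq, cubeFourierConst_sq_mul]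
  · simp

variable {s : Set (EuclideanSpace ℝ ι)}

def indicatorPlaneWaveLp (hs : MeasurableSet s) (w : EuclideanSpace ℝ ι) : L²[ι] :=
  ((memLp_planeWave w).indicator hs).toLp _

theorem inner_cubeFourierLp_indicatorPlaneWaveLp (hs : MeasurableSet s) (hsQ : s ⊆ piCube ι)
    (w : EuclideanSpace ℝ ι) (k : ι → ℤ) :
    inner ℂ (cubeFourierLp k) (indicatorPlaneWaveLp hs w) =
      cubeFourierConst ι * ∫ y in s, planeWave (w - latticePoint k) y := by
  have hpt : ∀ y, s.indicator (planeWave w) y * starRingEnd ℂ (planeWave (latticePoint k) y) =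
      s.indicator (planeWave (w - latticePoint k)) y := fun y => by
    by_cases hy : y ∈ s <;> simp [hy, planeWave_mul_conj]
  rw [indicatorPlaneWaveLp, inner_cubeFourierLp_toLp]
  simp only [hpt]
  rw [integral_indicator hs, Measure.restrict_restrict hs, inter_eq_left.2 hsQ]

theorem norm_indicatorPlaneWaveLp_sq (hs : MeasurableSet s) (hsQ : s ⊆ piCube ι)
    (w : EuclideanSpace ℝ ι) : ‖indicatorPlaneWaveLp hs w‖ ^ 2 = volume.real s := by
  have hpt : ∀ y, s.indicator (planeWave w) y * starRingEnd ℂ (s.indicator (planeWave w) y) =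
      s.indicator (fun _ => 1) y := fun y => by
    by_cases hy : y ∈ s <;> simp [hy, planeWave_mul_conj]
  rw [norm_sq_eq_re_inner (𝕜 := ℂ), indicatorPlaneWaveLp, L2.inner_toLp_toLp]
  simp only [RCLike.inner_apply, hpt]
  rw [integral_indicator_const _ hs, measureReal_restrict_apply hs, inter_eq_left.2 hsQ,
    Complex.real_smul, mul_one, RCLike.re_to_complex, Complex.ofReal_re]

theorem norm_setIntegral_planeWave_sq (hs : MeasurableSet s) (hsQ : s ⊆ piCube ι)
    (w : EuclideanSpace ℝ ι) (k : ι → ℤ) :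
    ‖∫ y in s, planeWave (w - latticePoint k) y‖ ^ 2 =
      (2 * π) ^ Fintype.card ι * ‖inner ℂ (cubeFourierLp k) (indicatorPlaneWaveLp hs w)‖ ^ 2 := by
  rw [inner_cubeFourierLp_indicatorPlaneWaveLp hs hsQ, norm_mul, Complex.norm_real,
    Real.norm_eq_abs]
  simp only [mul_pow, sq_abs]
  linear_combination (-‖∫ y in s, planeWave (w - latticePoint k) y‖ ^ 2) *
    cubeFourierConst_sq_mul (ι := ι)

theorem summable_norm_setIntegral_planeWave_sq (hs : MeasurableSet s) (hsQ : s ⊆ piCube ι)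
    (w : EuclideanSpace ℝ ι) :
    Summable fun k : ι → ℤ => ‖∫ y in s, planeWave (w - latticePoint k) y‖ ^ 2 := by
  simp only [norm_setIntegral_planeWave_sq hs hsQ]
  exact (orthonormal_cubeFourierLp.inner_products_summable _).mul_left _

theorem tsum_norm_setIntegral_planeWave_sq_le (hs : MeasurableSet s) (hsQ : s ⊆ piCube ι)
    (w : EuclideanSpace ℝ ι) :
    ∑' k : ι → ℤ, ‖∫ y in s, planeWave (w - latticePoint k) y‖ ^ 2 ≤
      (2 * π) ^ Fintype.card ι * volume.real s := by
  simp only [norm_setIntegral_planeWave_sq hs hsQ, tsum_mul_left]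
  grw [orthonormal_cubeFourierLp.tsum_inner_products_le, norm_indicatorPlaneWaveLp_sq hs hsQ]

end CubeFourier

theorem besinc_eq_integral_planeWave (c : ℝ) (x : E3) :
    besinc c x = (c / (2 * π)) ^ 3 * ∫ u in ballR, planeWave (c • x) u := by
  simp only [besinc, planeWave, real_inner_smul_left]

theorem measureReal_closedBall_fin_three (y : E3) {r : ℝ} (hr : 0 ≤ r) :
    volume.real (closedBall y r) = 4 * π / 3 * r ^ 3 := by
  rw [measureReal_def, EuclideanSpace.volume_closedBall_fin_three, ENNReal.toReal_mul,
    ENNReal.toReal_pow, ENNReal.toReal_ofReal hr, ENNReal.toReal_ofReal (by positivity)]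
  ring

theorem kv_eq_latticePoint (k : Fin 3 → ℤ) : kv k = latticePoint k := rfl

theorem besinc_sub_inv_smul_kv {c : ℝ} (hc : 0 < c) {L : ℕ} (hL : 0 < L) (x : E3)
    (k : Fin 3 → ℤ) :
    besinc c (x - (L : ℝ)⁻¹ • kv k) = (((L / (2 * π)) ^ 3 : ℝ) : ℂ) *
      ∫ y in closedBall 0 (c / L), planeWave ((L : ℝ) • x - latticePoint k) y := by
  have hL' : (0 : ℝ) < L := Nat.cast_pos.2 hL
  have hscale : (c / L) • ((L : ℝ) • x - latticePoint k) = c • (x - (L : ℝ)⁻¹ • kv k) := by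
    rw [smul_sub, smul_sub, smul_smul, smul_smul, div_mul_cancel₀ _ hL'.ne',
      div_eq_mul_inv, kv_eq_latticePoint]
  rw [setIntegral_closedBall_planeWave volume (div_pos hc hL'), hscale,
    besinc_eq_integral_planeWave, finrank_euclideanSpace_fin, ← ballR, Complex.real_smul,
    ← mul_assoc]
  congr 1
  have hLC : (L : ℂ) ≠ 0 := Nat.cast_ne_zero.2 hL.ne'
  push_cast
  field_simp

/-- For `c ≤ πL`: `Σ_{k/L∉R} |h_c(x − k/L)|² ≤ (4π/3) c³ L³` for every `x`. -/
theorem sum_sq_besinc_shift_le (c : ℝ) (hc : 0 < c) (L : ℕ) (hL : 0 < L)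
    (hcL : c ≤ π * L) (x : E3) :
    xiSq c L x ≤ 4 * π / 3 * c ^ 3 * (L : ℝ) ^ 3 := by
  have hL' : (0 : ℝ) < L := Nat.cast_pos.2 hL
  have hball : closedBall (0 : E3) (c / L) ⊆ piCube (Fin 3) :=
    closedBall_subset_piCube ((div_le_iff₀ hL').2 (by linarith))
  set F : (Fin 3 → ℤ) → ℝ := fun k =>
    ‖∫ y in closedBall 0 (c / L), planeWave ((L : ℝ) • x - latticePoint k) y‖ ^ 2
  have hF : ∀ k, ‖besinc c (x - (L : ℝ)⁻¹ • kv k)‖ ^ 2 = ((L / (2 * π)) ^ 3) ^ 2 * F k := by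
    intro k
    rw [besinc_sub_inv_smul_kv hc hL, norm_mul, mul_pow, Complex.norm_real, Real.norm_eq_abs,
      sq_abs]
  have hsum : Summable fun k => ‖besinc c (x - (L : ℝ)⁻¹ • kv k)‖ ^ 2 := by
    simp only [hF]
    exact (summable_norm_setIntegral_planeWave_sq measurableSet_closedBall hball _).mul_left _
  calc xiSq c L x ≤ ∑' k, ‖besinc c (x - (L : ℝ)⁻¹ • kv k)‖ ^ 2 :=
        hsum.tsum_subtype_le _ _ fun _ => sq_nonneg _
    _ = ((L / (2 * π)) ^ 3) ^ 2 * ∑' k, F k := by simp only [hF, tsum_mul_left]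
    _ ≤ ((L / (2 * π)) ^ 3) ^ 2 * ((2 * π) ^ 3 * volume.real (closedBall (0 : E3) (c / L))) := by
        gcongr
        exact tsum_norm_setIntegral_planeWave_sq_le measurableSet_closedBall hball _
    _ = 4 * π / 3 * c ^ 3 * L ^ 3 / (2 * π) ^ 3 := by
        rw [measureReal_closedBall_fin_three 0 (by positivity)]
        field_simp
    _ ≤ 4 * π / 3 * c ^ 3 * L ^ 3 :=
        div_le_self (by positivity) (one_le_pow₀ (by linarith [pi_gt_three]))
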